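/- arXiv:2007.14453 — 2 statements merged into one kernel-verified Lean document; each statement's English description precedes it below -/
import Mathlib

section
/- The projective special linear group PSL(3,4) is not isomorphic to the alternating group A_8. -/
/-- The projective special linear group `PSL(3,4)`: the special linear group of degree 3
over the field with 4 elements, modulo its center. -/
def PSL34 : Type :=
  Matrix.SpecialLinearGroup (Fin 3) (GaloisField 2 2) ⧸
    Subgroup.center (Matrix.SpecialLinearGroup (Fin 3) (GaloisField 2 2))

noncomputable instance : Group PSL34 :=
  inferInstanceAs (Group (Matrix.SpecialLinearGroup (Fin 3) (GaloisField 2 2) ⧸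
    Subgroup.center (Matrix.SpecialLinearGroup (Fin 3) (GaloisField 2 2))))

/-!
`A₈` contains `(0 1)(2 3)(4 5 6)`, of order 6, while `PSL(3, 4)` has no element of order 6.
Indeed, let `M ∈ SL(3, 4)` with `M⁶` scalar. Cayley–Hamilton gives `M³ = aM² + bM + 1`, and
squaring this in characteristic 2, with `a⁴ = a`, turns `M⁶` into `αM² + βM + γ` where
`(α, β) ≠ (0, 0)` unless `a = b = 0`, in which case `M³ = 1`. So `M` is scalar or satisfies
`M² = uM + v`, and then `M⁶ = u(u² + v)²M + const`: either `M` is scalar, or `u = 0` and `M²` is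
scalar, or `v = u²` and `M³ = uv` is scalar.
-/

open scoped MatrixGroups

theorem Subalgebra.coe_mem_bot_iff {K A : Type*} [CommSemiring K] [Semiring A] [Algebra K A]
    {S : Subalgebra K A} (y : S) :
    (y : A) ∈ (⊥ : Subalgebra K A) ↔ y ∈ (⊥ : Subalgebra K S) := by
  simp only [Algebra.mem_bot, Set.mem_range, Subtype.ext_iff, Subalgebra.coe_algebraMap]

section CharTwo

variable {K A : Type*} [Field K] [CharP K 2] [CommRing A] [Algebra K A]

theorem sq_mem_bot_or_pow_three_mem_bot_of_sq_eq {x : A} {u v : K}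
    (hx : x ^ 2 = algebraMap K A u * x + algebraMap K A v) (h6 : x ^ 6 ∈ (⊥ : Subalgebra K A)) :
    x ^ 2 ∈ (⊥ : Subalgebra K A) ∨ x ^ 3 ∈ (⊥ : Subalgebra K A) := by
  have two : (2 : A) = 0 := by
    rw [← map_ofNat (algebraMap K A) 2, CharTwo.two_eq_zero, map_zero]
  have h3 : x ^ 3 = algebraMap K A (u ^ 2 + v) * x + algebraMap K A (u * v) := by
    simp only [map_add, map_mul, map_pow]
    linear_combination (x + algebraMap K A u) * hx
  have hc : algebraMap K A (u * (u ^ 2 + v) ^ 2) * x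
      = x ^ 6 - algebraMap K A (v * (u ^ 2 + v) ^ 2 + u ^ 2 * v ^ 2) := by
    set U := algebraMap K A u
    set V := algebraMap K A v
    simp only [map_add, map_mul, map_pow] at h3 ⊢
    linear_combination -(x ^ 3 + (U ^ 2 + V) * x + U * V) * h3 - (U ^ 2 + V) ^ 2 * hx
      - (U ^ 2 + V) * U * V * x * two
  by_cases hc0 : u * (u ^ 2 + v) ^ 2 = 0
  · rcases mul_eq_zero.1 hc0 with hu | huv
    · left
      rw [hx, hu, map_zero, zero_mul, zero_add]
      exact Subalgebra.algebraMap_mem _ v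
    · right
      rw [h3, (pow_eq_zero_iff two_ne_zero).1 huv, map_zero, zero_mul, zero_add]
      exact Subalgebra.algebraMap_mem _ _
  · left
    rw [← Algebra.smul_def] at hc
    have hx1 : x ∈ (⊥ : Subalgebra K A) :=
      (Submodule.smul_mem_iff (Subalgebra.toSubmodule ⊥) hc0).1 <|
        hc ▸ Subalgebra.sub_mem _ h6 (Subalgebra.algebraMap_mem _ _)
    exact Subalgebra.pow_mem _ hx1 2

theorem sq_mem_bot_or_pow_three_mem_bot_of_quadratic {x : A} {α β : K} (hαβ : α ≠ 0 ∨ β ≠ 0)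
    (h2 : algebraMap K A α * x ^ 2 + algebraMap K A β * x ∈ (⊥ : Subalgebra K A))
    (h6 : x ^ 6 ∈ (⊥ : Subalgebra K A)) :
    x ^ 2 ∈ (⊥ : Subalgebra K A) ∨ x ^ 3 ∈ (⊥ : Subalgebra K A) := by
  by_cases hα : α = 0
  · rw [hα, map_zero, zero_mul, zero_add, ← Algebra.smul_def] at h2
    have hx1 : x ∈ (⊥ : Subalgebra K A) :=
      (Submodule.smul_mem_iff (Subalgebra.toSubmodule ⊥) (hαβ.resolve_left (not_not.2 hα))).1 h2
    exact Or.inl (Subalgebra.pow_mem _ hx1 2)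
  · obtain ⟨c, hc⟩ := Algebra.mem_bot.1 h2
    refine sq_mem_bot_or_pow_three_mem_bot_of_sq_eq (u := -β / α) (v := c / α) ?_ h6
    have hinv : algebraMap K A α⁻¹ * algebraMap K A α = 1 := by
      rw [← map_mul, inv_mul_cancel₀ hα, map_one]
    simp only [div_eq_mul_inv, map_mul, map_neg]
    linear_combination (-algebraMap K A α⁻¹) * hc - x ^ 2 * hinv

theorem sq_mem_bot_or_pow_three_mem_bot_of_pow_three_eq {x : A} {a b : K} (ha : a ^ 4 = a)
    (hx : x ^ 3 = algebraMap K A a * x ^ 2 + algebraMap K A b * x + 1)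
    (h6 : x ^ 6 ∈ (⊥ : Subalgebra K A)) :
    x ^ 2 ∈ (⊥ : Subalgebra K A) ∨ x ^ 3 ∈ (⊥ : Subalgebra K A) := by
  by_cases h0 : a = 0 ∧ b = 0
  · right
    rw [hx, h0.1, h0.2, map_zero, zero_mul, zero_mul, zero_add, zero_add]
    exact Subalgebra.one_mem _
  have two : (2 : A) = 0 := by
    rw [← map_ofNat (algebraMap K A) 2, CharTwo.two_eq_zero, map_zero]
  have hx6 : x ^ 6 = algebraMap K A (a ^ 4 + a ^ 2 * b + b ^ 2) * x ^ 2
      + algebraMap K A (a ^ 2 * (a * b + 1)) * x + algebraMap K A (a ^ 3 + 1) := by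
    set a' := algebraMap K A a
    set b' := algebraMap K A b
    have hx4 : x ^ 4 = (a' ^ 2 + b') * x ^ 2 + (a' * b' + 1) * x + a' := by
      linear_combination (x + a') * hx
    simp only [map_add, map_mul, map_pow, map_one]
    linear_combination (x ^ 3 + a' * x ^ 2 + b' * x + 1) * hx + a' ^ 2 * hx4
      + (a' * b' * x ^ 3 + a' * x ^ 2 + b' * x) * two
  refine sq_mem_bot_or_pow_three_mem_bot_of_quadratic
    (α := a ^ 4 + a ^ 2 * b + b ^ 2) (β := a ^ 2 * (a * b + 1)) ?_ ?_ h6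
  · by_contra! h
    obtain ⟨hα, hβ⟩ := h
    rcases mul_eq_zero.1 hβ with ha0 | hab
    · have hb : b ^ 2 = 0 := by linear_combination hα - (a ^ 2 + b) * ha0
      exact h0 ⟨(pow_eq_zero_iff two_ne_zero).1 ha0, (pow_eq_zero_iff two_ne_zero).1 hb⟩
    · have hb : b ^ 2 = 0 := by linear_combination hα - ha - a * hab
      rw [(pow_eq_zero_iff two_ne_zero).1 hb, mul_zero, zero_add] at hab
      exact one_ne_zero hab
  · rw [eq_sub_of_add_eq hx6.symm]
    exact Subalgebra.sub_mem _ h6 (Subalgebra.algebraMap_mem _ _)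

end CharTwo

open Polynomial in
theorem Matrix.exists_pow_three_eq_of_fin_three {R : Type*} [CommRing R] [Nontrivial R]
    (M : Matrix (Fin 3) (Fin 3) R) :
    ∃ a b : R, M ^ 3 = algebraMap R _ a * M ^ 2 + algebraMap R _ b * M + algebraMap R _ M.det := by
  have hdeg : M.charpoly.natDegree = 3 := by simp [Matrix.charpoly_natDegree_eq_dim]
  have hCH := M.aeval_self_charpoly
  rw [M.charpoly_monic.as_sum, hdeg] at hCH
  simp only [Finset.sum_range_succ, Finset.sum_range_zero, aeval_C, pow_zero, pow_one, mul_one,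
    zero_add, map_add, map_mul, map_pow, aeval_X] at hCH
  refine ⟨-M.charpoly.coeff 2, -M.charpoly.coeff 1, ?_⟩
  rw [M.det_eq_sign_charpoly_coeff, eq_neg_of_add_eq_zero_left hCH]
  simp only [Fintype.card_fin, map_neg, map_mul, map_pow, map_one]
  noncomm_ring

open scoped IsMulCommutative in
theorem Matrix.sq_mem_bot_or_pow_three_mem_bot_of_det_eq_one {K : Type*} [Field K] [CharP K 2]
    (hK : ∀ c : K, c ^ 4 = c) {M : Matrix (Fin 3) (Fin 3) K} (hM : M.det = 1)
    (h6 : M ^ 6 ∈ (⊥ : Subalgebra K (Matrix (Fin 3) (Fin 3) K))) :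
    M ^ 2 ∈ (⊥ : Subalgebra K _) ∨ M ^ 3 ∈ (⊥ : Subalgebra K _) := by
  obtain ⟨a, b, hM3⟩ := M.exists_pow_three_eq_of_fin_three
  let x : Algebra.adjoin K {M} := ⟨M, Algebra.self_mem_adjoin_singleton K M⟩
  have hx : x ^ 3 = algebraMap K _ a * x ^ 2 + algebraMap K _ b * x + 1 := by
    apply Subtype.ext
    simpa [x, hM] using hM3
  have hpow (n : ℕ) : M ^ n = ((x ^ n : Algebra.adjoin K {M}) : Matrix (Fin 3) (Fin 3) K) := rfl
  simp only [hpow, Subalgebra.coe_mem_bot_iff] at h6 ⊢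
  exact sq_mem_bot_or_pow_three_mem_bot_of_pow_three_eq (hK a) hx h6

theorem Matrix.SpecialLinearGroup.mem_center_iff_coe_mem_bot {n K : Type*} [Fintype n]
    [DecidableEq n] [CommRing K] {A : Matrix.SpecialLinearGroup n K} :
    A ∈ Subgroup.center (Matrix.SpecialLinearGroup n K) ↔
      (A : Matrix n n K) ∈ (⊥ : Subalgebra K _) := by
  rw [mem_center_iff, Algebra.mem_bot]
  constructor
  · rintro ⟨r, -, hr⟩
    exact ⟨r, by rw [← hr]; rfl⟩
  · rintro ⟨r, hr⟩
    refine ⟨r, ?_, by rw [← hr]; rfl⟩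
    have hdet := A.prop
    rw [← hr, Matrix.algebraMap_eq_diagonal, Matrix.det_diagonal] at hdet
    simpa using hdet

theorem Matrix.ProjectiveSpecialLinearGroup.orderOf_ne_six {K : Type*} [Field K] [CharP K 2]
    (hK : ∀ c : K, c ^ 4 = c) (g : PSL(3, K)) : orderOf g ≠ 6 := by
  intro hg
  obtain ⟨A, rfl⟩ := QuotientGroup.mk_surjective g
  have hpow (n : ℕ) :
      (A : PSL(3, K)) ^ n = 1 ↔ (A : Matrix (Fin 3) (Fin 3) K) ^ n ∈ (⊥ : Subalgebra K _) := by
    rw [← QuotientGroup.mk_pow, QuotientGroup.eq_one_iff,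
      SpecialLinearGroup.mem_center_iff_coe_mem_bot, SpecialLinearGroup.coe_pow]
  have h6 := (hpow 6).1 (hg ▸ pow_orderOf_eq_one _)
  rcases Matrix.sq_mem_bot_or_pow_three_mem_bot_of_det_eq_one hK A.prop h6 with h | h
  · exact absurd (hg ▸ orderOf_dvd_of_pow_eq_one ((hpow 2).2 h)) (by norm_num)
  · exact absurd (hg ▸ orderOf_dvd_of_pow_eq_one ((hpow 3).2 h)) (by norm_num)

set_option maxRecDepth 2000 in
theorem exists_orderOf_eq_six_alternatingGroup_fin_eight :
    ∃ g : alternatingGroup (Fin 8), orderOf g = 6 := by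
  let σ : Equiv.Perm (Fin 8) := Equiv.swap 0 1 * Equiv.swap 2 3 * Equiv.swap 4 5 * Equiv.swap 5 6
  refine ⟨⟨σ, Equiv.Perm.mem_alternatingGroup.2 (by decide)⟩, ?_⟩
  rw [Subgroup.orderOf_mk, orderOf_eq_iff (by norm_num)]
  exact ⟨by decide, by decide⟩

theorem GaloisField.pow_four_eq_self (c : GaloisField 2 2) : c ^ 4 = c := by
  have := Fintype.ofFinite (GaloisField 2 2)
  have h := FiniteField.pow_card c
  rwa [← Nat.card_eq_fintype_card, GaloisField.card 2 2 (by norm_num)] at h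

theorem PSL34_not_iso_A8 : ¬ Nonempty (PSL34 ≃* alternatingGroup (Fin 8)) := by
  rintro ⟨e⟩
  obtain ⟨g, hg⟩ := exists_orderOf_eq_six_alternatingGroup_fin_eight
  exact Matrix.ProjectiveSpecialLinearGroup.orderOf_ne_six GaloisField.pow_four_eq_self (e.symm g)
    ((MulEquiv.orderOf_eq e.symm g).trans hg)
end

section
/- Let G be a finite group of order 2^6 · 3^2 · 5 · 7 = 20160 such that the normalizer of a Sylow 7-subgroup P has order 21. Then C_G(P) = P. -/
/-!
The centralizer `C` of `P` lies between `P` (of order 7) and `N_G(P)` (of order 21), so `C = P` or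
`C = N_G(P)`. In the second case Burnside's transfer theorem gives a normal complement `K` of `P`,
of order 2880. Since `7 ∤ |K|`, the 7-group `P` fixes one of the Sylow 5-subgroups of `K` under
conjugation, say `Q`. As `|Aut Q| = 4` is prime to 7, `P` centralizes `Q`; hence `Q ≤ C` and
`5 ∣ 21`, which is absurd.
-/

open Subgroup Pointwise

section

variable {G : Type*} [Group G]

theorem Sylow.card_eq_of_dvd_of_not_sq_dvd [Finite G] {p : ℕ} [hp : Fact p.Prime]
    (P : Sylow p G) (hdvd : p ∣ Nat.card G) (hsq : ¬ p ^ 2 ∣ Nat.card G) : Nat.card P = p := by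
  obtain ⟨n, hn⟩ := P.2.exists_card_eq
  have h1 : p ^ 1 ∣ p ^ n := by rw [pow_one, ← hn]; exact P.dvd_card_of_dvd_card hdvd
  have h2 : ¬ p ^ 2 ∣ p ^ n := fun h ↦ hsq (h.trans (hn ▸ P.card_subgroup_dvd_card))
  rw [Nat.pow_dvd_pow_iff_le_right hp.out.one_lt] at h1 h2
  rw [hn, show n = 1 by omega, pow_one]

theorem Subgroup.eq_or_eq_of_le_of_le_of_card_eq_mul_prime [Finite G] {H K L : Subgroup G}
    (hHK : H ≤ K) (hKL : K ≤ L) {p : ℕ} (hp : p.Prime) (hL : Nat.card L = Nat.card H * p) :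
    K = H ∨ K = L := by
  obtain ⟨a, ha⟩ := card_dvd_of_le hHK
  obtain ⟨b, hb⟩ := card_dvd_of_le hKL
  have hab : a * b = p := by
    refine Nat.eq_of_mul_eq_mul_left (Nat.card_pos (α := H)) ?_
    rw [← hL, hb, ha, mul_assoc]
  rcases Nat.prime_mul_iff.mp (hab ▸ hp) with ⟨-, rfl⟩ | ⟨-, rfl⟩
  · exact .inr (eq_of_le_of_card_ge hKL (by rw [hb, mul_one]))
  · exact .inl (eq_of_le_of_card_ge hHK (by rw [ha, mul_one])).symm

theorem Subgroup.le_centralizer_of_le_normalizer_of_coprime {P Q : Subgroup G}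
    (hPQ : P ≤ normalizer (Q : Set G)) (hcop : (Nat.card P).Coprime (Nat.card (MulAut Q))) :
    P ≤ centralizer (Q : Set G) := by
  set f := Q.normalizerMonoidHom.comp (inclusion hPQ)
  have hf : f = 1 := by
    rw [← MonoidHom.range_eq_bot_iff, ← card_eq_one]
    exact Nat.eq_one_of_dvd_coprimes hcop (card_range_dvd f) (card_subgroup_dvd_card _)
  intro g hg
  have hker : inclusion hPQ ⟨g, hg⟩ ∈ Q.normalizerMonoidHom.ker := by
    rw [MonoidHom.mem_ker]
    exact DFunLike.congr_fun hf ⟨g, hg⟩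
  rwa [normalizerMonoidHom_ker, mem_subgroupOf] at hker

theorem IsPGroup.exists_sylow_le_normalizer_map_subtype [Finite G] {p q : ℕ} [Fact p.Prime]
    [Fact q.Prime] {P K : Subgroup G} [K.Normal] (hP : IsPGroup p P) (hK : ¬ p ∣ Nat.card K) :
    ∃ Q : Sylow q K, P ≤ normalizer (((Q : Subgroup K).map K.subtype : Subgroup G) : Set G) := by
  let _ : MulAction P (Sylow q K) :=
    MulAction.compHom _ ((MulAut.conjNormal (H := K)).comp P.subtype)
  have hcard : ¬ p ∣ Nat.card (Sylow q K) := fun h ↦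
    hK (h.trans ((default : Sylow q K).card_dvd_index.trans (index_dvd_card _)))
  obtain ⟨Q, hQ⟩ := hP.nonempty_fixed_point_of_prime_not_dvd_card _ hcard
  refine ⟨Q, fun g hg ↦ mem_normalizer_fintype ?_⟩
  rintro _ ⟨x, hx, rfl⟩
  have hQg : MulAut.conjNormal (H := K) g • (Q : Subgroup K) = Q :=
    congrArg Sylow.toSubgroup (hQ ⟨g, hg⟩)
  refine ⟨MulAut.conjNormal g x, ?_, by simp [MulAut.conjNormal_apply]⟩
  rw [← hQg]
  exact smul_mem_pointwise_smul x _ _ hx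

end

theorem self_centralizing_sylow_seven_in_group_20160 (G : Type*) [Group G] [Finite G]
    (hG : Nat.card G = 2 ^ 6 * 3 ^ 2 * 5 * 7) (P : Sylow 7 G)
    (hN : Nat.card (Subgroup.normalizer ((P : Subgroup G) : Set G)) = 21) :
    Subgroup.centralizer ((P : Subgroup G) : Set G) = (P : Subgroup G) := by
  have : Fact (Nat.Prime 5) := ⟨by norm_num⟩
  have : Fact (Nat.Prime 7) := ⟨by norm_num⟩
  have hP : Nat.card P = 7 :=
    P.card_eq_of_dvd_of_not_sq_dvd (by rw [hG]; norm_num) (by rw [hG]; norm_num)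
  have := isCyclic_of_prime_card hP
  refine (eq_or_eq_of_le_of_le_of_card_eq_mul_prime (le_centralizer _)
    (centralizer_le_normalizer _) (p := 3) (by norm_num) (by rw [hN, hP])).resolve_right
    fun hCN ↦ ?_
  have hKP := (MonoidHom.ker_transferSylow_isComplement' P hCN.ge).card_mul_card
  set K := (MonoidHom.transferSylow P hCN.ge).ker
  have hK : Nat.card K = 2 ^ 6 * 3 ^ 2 * 5 := by
    rw [hP, hG] at hKP
    omega
  obtain ⟨Q, hPQ⟩ :=
    P.2.exists_sylow_le_normalizer_map_subtype (q := 5) (K := K) (by rw [hK]; norm_num)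
  set Q' := (Q : Subgroup K).map K.subtype
  have hQ' : Nat.card Q' = 5 := by
    rw [card_map_of_injective K.subtype_injective]
    exact Q.card_eq_of_dvd_of_not_sq_dvd (by rw [hK]; norm_num) (by rw [hK]; norm_num)
  have := isCyclic_of_prime_card hQ'
  have hPQ' : (P : Subgroup G) ≤ centralizer Q' :=
    le_centralizer_of_le_normalizer_of_coprime hPQ (by
      rw [IsCyclic.card_mulAut, hQ', hP, Nat.totient_prime (by norm_num)]; norm_num)
  have h5 : 5 ∣ 21 := by
    rw [← hQ', ← hN, ← hCN]
    exact card_dvd_of_le (le_centralizer_iff.mp hPQ')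
  norm_num at h5
end
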